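/- Let n, K ≥ 1, let (Ω, 𝒜, ℙ) be a probability space, let T ⊆ S ⊆ {1, …, K} with S and T nonempty, and set p₁ = |S|/K and p₂ = |T|/K. Let ξ ∈ {0,1}ⁿ be a binary mask and let ξ' = 1 − ξ (coordinatewise complement). Let w₁, w₂ ∈ ℝ, let σ₁, …, σ_K ≥ 0, and set δ = (1/K)·Σ_{k=1}^{K} σ_k². For each k ∈ {1, …, K}, let a_k, b_k : Ω → ℝⁿ be Bochner square-integrable random vectors with ∫ ‖a_k − ∫a_k dℙ‖² dℙ ≤ σ_k² and ∫ ‖b_k − ∫b_k dℙ‖² dℙ ≤ σ_k², and define g_k = w₁·(ξ ⊙ a_k) + w₂·b_k. Define the random vector f : Ω → ℝⁿ by f = (1/(K p₁))·Σ_{k ∈ S} (ξ ⊙ g_k) + (1/(K p₂))·Σ_{k ∈ T} (ξ' ⊙ g_k). Then the variance of f is bounded by ∫ ‖f − ∫ f dℙ‖² dℙ ≤ 4·δ·(1/p₁ + 1/p₂)·(w₁² + w₂²). -/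

import Mathlib

/-! Masks with entries in `[-1, 1]` are contractions, so they do not increase the variance
`𝔼‖X - 𝔼X‖²`. Splitting `f` into its two masked averages, and each `g_k` into its two terms,
costs a factor `2` each time through `‖u + v‖² ≤ 2(‖u‖² + ‖v‖²)`: this is the constant `4`.
By Jensen, the variance of an average over the `|S| = K p₁` devices of `S` is at most the mean
of their variances, `(1/|S|) ∑_{k∈S} 2(w₁² + w₂²)σ_k² ≤ 2(w₁² + w₂²) δ / p₁`. -/

open MeasureTheory Finset

/-- Coordinatewise (Hadamard) product of a mask `ξ` with a vector `x` in Euclidean space. -/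
def hadamard {n : ℕ} (ξ : Fin n → ℝ) (x : EuclideanSpace ℝ (Fin n)) :
    EuclideanSpace ℝ (Fin n) :=
  WithLp.toLp 2 (fun i => ξ i * x i)

lemma norm_inv_card_smul_sum_sq_le {ι E : Type*} [SeminormedAddCommGroup E] [NormedSpace ℝ E]
    (s : Finset ι) (v : ι → E) :
    ‖(#s : ℝ)⁻¹ • ∑ i ∈ s, v i‖ ^ 2 ≤ (∑ i ∈ s, ‖v i‖ ^ 2) / #s :=
  calc ‖(#s : ℝ)⁻¹ • ∑ i ∈ s, v i‖ ^ 2 = (‖∑ i ∈ s, v i‖ / #s) ^ 2 := by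
        rw [norm_smul, norm_inv, Real.norm_natCast, inv_mul_eq_div]
    _ ≤ ((∑ i ∈ s, ‖v i‖) / #s) ^ 2 := by gcongr; exact norm_sum_le s v
    _ ≤ (∑ i ∈ s, ‖v i‖ ^ 2) / #s := sum_div_card_sq_le_sum_sq_div_card

lemma norm_add_sq_le_two_mul {E : Type*} [SeminormedAddCommGroup E] (u v : E) :
    ‖u + v‖ ^ 2 ≤ 2 * (‖u‖ ^ 2 + ‖v‖ ^ 2) :=
  (pow_le_pow_left₀ (norm_nonneg _) (norm_add_le u v) 2).trans add_sq_le

section TotalVariance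

variable {Ω E : Type*} [MeasurableSpace Ω] {μ : Measure Ω}
  [NormedAddCommGroup E] [NormedSpace ℝ E]

noncomputable def totalVariance (μ : Measure Ω) (X : Ω → E) : ℝ :=
  ∫ ω, ‖X ω - ∫ ω', X ω' ∂μ‖ ^ 2 ∂μ

lemma totalVariance_nonneg (X : Ω → E) : 0 ≤ totalVariance μ X :=
  integral_nonneg fun _ => sq_nonneg _

lemma totalVariance_smul (c : ℝ) (X : Ω → E) :
    totalVariance μ (fun ω => c • X ω) = c ^ 2 * totalVariance μ X := by
  simp only [totalVariance, integral_smul, ← smul_sub, norm_smul, mul_pow, Real.norm_eq_abs,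
    sq_abs, integral_const_mul]

variable [IsFiniteMeasure μ]

omit [NormedSpace ℝ E] in
lemma MeasureTheory.MemLp.integrable_norm_sub_sq {X : Ω → E} (hX : MemLp X 2 μ) (c : E) :
    Integrable (fun ω => ‖X ω - c‖ ^ 2) μ :=
  (hX.sub (memLp_const c)).norm.integrable_sq

lemma totalVariance_add_le {X Y : Ω → E} (hX : MemLp X 2 μ) (hY : MemLp Y 2 μ) :
    totalVariance μ (fun ω => X ω + Y ω) ≤ 2 * (totalVariance μ X + totalVariance μ Y) := by
  have hcentered : ∀ ω, X ω + Y ω - ∫ ω', X ω' + Y ω' ∂μ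
      = (X ω - ∫ ω', X ω' ∂μ) + (Y ω - ∫ ω', Y ω' ∂μ) := fun ω => by
    rw [integral_add (hX.integrable one_le_two) (hY.integrable one_le_two)]; abel
  have hXi := hX.integrable_norm_sub_sq (∫ ω', X ω' ∂μ)
  have hYi := hY.integrable_norm_sub_sq (∫ ω', Y ω' ∂μ)
  rw [totalVariance, totalVariance, totalVariance, ← integral_add hXi hYi, ← integral_const_mul]
  refine integral_mono_of_nonneg (ae_of_all _ fun _ => sq_nonneg _) ((hXi.add hYi).const_mul 2)
    (ae_of_all _ fun ω => ?_)
  simpa only [hcentered] using norm_add_sq_le_two_mul _ _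

lemma totalVariance_average_le {ι : Type*} (s : Finset ι) {X : ι → Ω → E}
    (hX : ∀ i ∈ s, MemLp (X i) 2 μ) :
    totalVariance μ (fun ω => (#s : ℝ)⁻¹ • ∑ i ∈ s, X i ω)
      ≤ (∑ i ∈ s, totalVariance μ (X i)) / #s := by
  have hcentered : ∀ ω, (#s : ℝ)⁻¹ • ∑ i ∈ s, X i ω - ∫ ω', (#s : ℝ)⁻¹ • ∑ i ∈ s, X i ω' ∂μ
      = (#s : ℝ)⁻¹ • ∑ i ∈ s, (X i ω - ∫ ω', X i ω' ∂μ) := fun ω => by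
    rw [integral_smul, integral_finsetSum s fun i hi => (hX i hi).integrable one_le_two,
      sum_sub_distrib, smul_sub]
  have hi : ∀ i ∈ s, Integrable (fun ω => ‖X i ω - ∫ ω', X i ω' ∂μ‖ ^ 2) μ :=
    fun i hi => (hX i hi).integrable_norm_sub_sq _
  simp only [totalVariance]
  rw [← integral_finsetSum s hi, ← integral_div]
  refine integral_mono_of_nonneg (ae_of_all _ fun _ => sq_nonneg _)
    ((integrable_finsetSum s hi).div_const _) (ae_of_all _ fun ω => ?_)
  simpa only [hcentered] using norm_inv_card_smul_sum_sq_le s _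

lemma totalVariance_smul_add_smul_le {X Y : Ω → E} (hX : MemLp X 2 μ) (hY : MemLp Y 2 μ)
    (c d : ℝ) :
    totalVariance μ (fun ω => c • X ω + d • Y ω)
      ≤ 2 * (c ^ 2 * totalVariance μ X + d ^ 2 * totalVariance μ Y) := by
  rw [← totalVariance_smul, ← totalVariance_smul]
  exact totalVariance_add_le (hX.const_smul c) (hY.const_smul d)

variable {F : Type*} [NormedAddCommGroup F] [NormedSpace ℝ F] [CompleteSpace E] [CompleteSpace F]

lemma totalVariance_comp_le {X : Ω → E} (hX : MemLp X 2 μ) (L : E →L[ℝ] F) :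
    totalVariance μ (fun ω => L (X ω)) ≤ ‖L‖ ^ 2 * totalVariance μ X := by
  have hXi := hX.integrable_norm_sub_sq (∫ ω', X ω' ∂μ)
  rw [totalVariance, totalVariance, ← integral_const_mul,
    L.integral_comp_comm (hX.integrable one_le_two)]
  refine integral_mono_of_nonneg (ae_of_all _ fun _ => sq_nonneg _) (hXi.const_mul _)
    (ae_of_all _ fun ω => ?_)
  dsimp only
  rw [← map_sub, ← mul_pow]
  exact pow_le_pow_left₀ (norm_nonneg _) (L.le_opNorm _) 2

end TotalVariance

section Hadamard

variable {n : ℕ}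

noncomputable def hadamardCLM (ξ : Fin n → ℝ) :
    EuclideanSpace ℝ (Fin n) →L[ℝ] EuclideanSpace ℝ (Fin n) :=
  LinearMap.toContinuousLinearMap
    { toFun := hadamard ξ
      map_add' := fun x y => by ext i; simp only [hadamard, PiLp.add_apply]; ring
      map_smul' := fun c x => by
        ext i; simp only [hadamard, PiLp.smul_apply, smul_eq_mul, RingHom.id_apply]; ring }

@[simp] lemma hadamardCLM_apply (ξ : Fin n → ℝ) (x : EuclideanSpace ℝ (Fin n)) :
    hadamardCLM ξ x = hadamard ξ x := rfl

lemma norm_hadamardCLM_le_one {ξ : Fin n → ℝ} (hξ : ∀ i, |ξ i| ≤ 1) : ‖hadamardCLM ξ‖ ≤ 1 := by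
  refine (hadamardCLM ξ).opNorm_le_bound zero_le_one fun x => ?_
  rw [one_mul, hadamardCLM_apply, EuclideanSpace.norm_eq, EuclideanSpace.norm_eq]
  gcongr with i
  calc ‖ξ i * x i‖ = |ξ i| * ‖x i‖ := by rw [norm_mul, Real.norm_eq_abs]
    _ ≤ ‖x i‖ := mul_le_of_le_one_left (norm_nonneg _) (hξ i)

lemma totalVariance_hadamard_le {Ω : Type*} [MeasurableSpace Ω] {μ : Measure Ω}
    [IsFiniteMeasure μ] {ξ : Fin n → ℝ} (hξ : ∀ i, |ξ i| ≤ 1)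
    {X : Ω → EuclideanSpace ℝ (Fin n)} (hX : MemLp X 2 μ) :
    totalVariance μ (fun ω => hadamard ξ (X ω)) ≤ totalVariance μ X :=
  calc totalVariance μ (fun ω => hadamardCLM ξ (X ω))
      ≤ ‖hadamardCLM ξ‖ ^ 2 * totalVariance μ X := totalVariance_comp_le hX _
    _ ≤ totalVariance μ X := mul_le_of_le_one_left (totalVariance_nonneg X)
        (pow_le_one₀ (norm_nonneg _) (norm_hadamardCLM_le_one hξ))

lemma totalVariance_smul_hadamard_add_smul_le {Ω : Type*} [MeasurableSpace Ω] {μ : Measure Ω}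
    [IsFiniteMeasure μ] {ξ : Fin n → ℝ} (hξ : ∀ i, |ξ i| ≤ 1)
    {X Y : Ω → EuclideanSpace ℝ (Fin n)} (hX : MemLp X 2 μ) (hY : MemLp Y 2 μ) {v : ℝ}
    (hvX : totalVariance μ X ≤ v) (hvY : totalVariance μ Y ≤ v) (c d : ℝ) :
    totalVariance μ (fun ω => c • hadamard ξ (X ω) + d • Y ω) ≤ 2 * (c ^ 2 + d ^ 2) * v :=
  calc _ ≤ 2 * (c ^ 2 * totalVariance μ (fun ω => hadamard ξ (X ω))
        + d ^ 2 * totalVariance μ Y) :=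
        totalVariance_smul_add_smul_le ((hadamardCLM ξ).comp_memLp' hX) hY c d
    _ ≤ 2 * (c ^ 2 * v + d ^ 2 * v) := by
        gcongr
        exact (totalVariance_hadamard_le hξ hX).trans hvX
    _ = 2 * (c ^ 2 + d ^ 2) * v := by ring

lemma totalVariance_add_hadamard_averages_le {Ω ι : Type*} [MeasurableSpace Ω] {μ : Measure Ω}
    [IsFiniteMeasure μ] {ξ ξ' : Fin n → ℝ} (hξ : ∀ i, |ξ i| ≤ 1) (hξ' : ∀ i, |ξ' i| ≤ 1)
    {X : ι → Ω → EuclideanSpace ℝ (Fin n)} (hX : ∀ i, MemLp (X i) 2 μ) (s t : Finset ι) :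
    totalVariance μ (fun ω => (#s : ℝ)⁻¹ • ∑ i ∈ s, hadamard ξ (X i ω)
        + (#t : ℝ)⁻¹ • ∑ i ∈ t, hadamard ξ' (X i ω))
      ≤ 2 * ((∑ i ∈ s, totalVariance μ (X i)) / #s + (∑ i ∈ t, totalVariance μ (X i)) / #t) := by
  have haverage : ∀ ζ : Fin n → ℝ, (∀ j, |ζ j| ≤ 1) → ∀ u : Finset ι,
      MemLp (fun ω => (#u : ℝ)⁻¹ • ∑ i ∈ u, hadamard ζ (X i ω)) 2 μ ∧
      totalVariance μ (fun ω => (#u : ℝ)⁻¹ • ∑ i ∈ u, hadamard ζ (X i ω))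
        ≤ (∑ i ∈ u, totalVariance μ (X i)) / #u := fun ζ hζ u => by
    have hζX : ∀ i ∈ u, MemLp (fun ω => hadamard ζ (X i ω)) 2 μ :=
      fun i _ => (hadamardCLM ζ).comp_memLp' (hX i)
    refine ⟨(memLp_finsetSum u hζX).const_smul ((#u : ℝ)⁻¹), ?_⟩
    calc _ ≤ (∑ i ∈ u, totalVariance μ (fun ω => hadamard ζ (X i ω))) / #u :=
          totalVariance_average_le u hζX
      _ ≤ (∑ i ∈ u, totalVariance μ (X i)) / #u := by
          gcongr with i
          exact totalVariance_hadamard_le hζ (hX i)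
  calc _ ≤ 2 * (totalVariance μ (fun ω => (#s : ℝ)⁻¹ • ∑ i ∈ s, hadamard ξ (X i ω))
        + totalVariance μ (fun ω => (#t : ℝ)⁻¹ • ∑ i ∈ t, hadamard ξ' (X i ω))) :=
        totalVariance_add_le (haverage ξ hξ s).1 (haverage ξ' hξ' t).1
    _ ≤ _ := by gcongr; exacts [(haverage ξ hξ s).2, (haverage ξ' hξ' t).2]

end Hadamard

theorem bounded_global_gradient_variance_general
    (n K : ℕ) (hK : 1 ≤ K)
    {Ω : Type*} [MeasurableSpace Ω] (ℙ : Measure Ω) [IsProbabilityMeasure ℙ]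
    (S T : Finset (Fin K))
    (p₁ p₂ : ℝ) (hp₁ : p₁ = (S.card : ℝ) / K) (hp₂ : p₂ = (T.card : ℝ) / K)
    (ξ ξ' : Fin n → ℝ) (hξ : ∀ i, ξ i = 0 ∨ ξ i = 1) (hξ' : ∀ i, ξ' i = 1 - ξ i)
    (w₁ w₂ : ℝ) (σ : Fin K → ℝ)
    (δ : ℝ) (hδ : δ = (1 / (K : ℝ)) * ∑ k, σ k ^ 2)
    (a b : Fin K → Ω → EuclideanSpace ℝ (Fin n))
    (ha : ∀ k, MemLp (a k) 2 ℙ) (hb : ∀ k, MemLp (b k) 2 ℙ)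
    (hva : ∀ k, ∫ ω, ‖a k ω - ∫ ω', a k ω' ∂ℙ‖ ^ 2 ∂ℙ ≤ σ k ^ 2)
    (hvb : ∀ k, ∫ ω, ‖b k ω - ∫ ω', b k ω' ∂ℙ‖ ^ 2 ∂ℙ ≤ σ k ^ 2)
    (g : Fin K → Ω → EuclideanSpace ℝ (Fin n))
    (hg : ∀ k ω, g k ω = w₁ • hadamard ξ (a k ω) + w₂ • b k ω)
    (f : Ω → EuclideanSpace ℝ (Fin n))
    (hf : ∀ ω, f ω = (1 / ((K : ℝ) * p₁)) • ∑ k ∈ S, hadamard ξ (g k ω) +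
        (1 / ((K : ℝ) * p₂)) • ∑ k ∈ T, hadamard ξ' (g k ω)) :
    ∫ ω, ‖f ω - ∫ ω', f ω' ∂ℙ‖ ^ 2 ∂ℙ ≤
      4 * δ * (1 / p₁ + 1 / p₂) * (w₁ ^ 2 + w₂ ^ 2) := by
  have hK₀ : (K : ℝ) ≠ 0 := by positivity
  have hmask : ∀ i, |ξ i| ≤ 1 := fun i => by rcases hξ i with h | h <;> simp [h]
  have hmask' : ∀ i, |ξ' i| ≤ 1 := fun i => by rcases hξ i with h | h <;> simp [hξ', h]
  have hgk : ∀ k, g k = fun ω => w₁ • hadamard ξ (a k ω) + w₂ • b k ω := fun k => funext (hg k)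
  have hg₂ : ∀ k, MemLp (g k) 2 ℙ := fun k => hgk k ▸
    (((hadamardCLM ξ).comp_memLp' (ha k)).const_smul w₁).add ((hb k).const_smul w₂)
  have hgvar : ∀ k, totalVariance ℙ (g k) ≤ 2 * (w₁ ^ 2 + w₂ ^ 2) * σ k ^ 2 := fun k =>
    hgk k ▸ totalVariance_smul_hadamard_add_smul_le hmask (ha k) (hb k) (hva k) (hvb k) w₁ w₂
  have hsum : ∀ U : Finset (Fin K),
      ∑ k ∈ U, totalVariance ℙ (g k) ≤ 2 * (w₁ ^ 2 + w₂ ^ 2) * (K * δ) := fun U =>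
    calc _ ≤ ∑ k ∈ U, 2 * (w₁ ^ 2 + w₂ ^ 2) * σ k ^ 2 := sum_le_sum fun k _ => hgvar k
      _ ≤ 2 * (w₁ ^ 2 + w₂ ^ 2) * ∑ k, σ k ^ 2 := by
          rw [← mul_sum]
          exact mul_le_mul_of_nonneg_left (sum_le_univ_sum_of_nonneg fun k => sq_nonneg _)
            (by positivity)
      _ = 2 * (w₁ ^ 2 + w₂ ^ 2) * (K * δ) := by rw [hδ]; field_simp
  have hcoef : ∀ U : Finset (Fin K), 1 / ((K : ℝ) * (#U / K)) = (#U : ℝ)⁻¹ := fun U => by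
    rw [mul_div_cancel₀ _ hK₀, one_div]
  obtain rfl : f = fun ω => (#S : ℝ)⁻¹ • ∑ k ∈ S, hadamard ξ (g k ω)
      + (#T : ℝ)⁻¹ • ∑ k ∈ T, hadamard ξ' (g k ω) := funext fun ω => by
    rw [hf, hp₁, hp₂, hcoef, hcoef]
  calc _ ≤ 2 * ((∑ k ∈ S, totalVariance ℙ (g k)) / #S + (∑ k ∈ T, totalVariance ℙ (g k)) / #T) :=
        totalVariance_add_hadamard_averages_le hmask hmask' hg₂ S T
    _ ≤ 2 * (2 * (w₁ ^ 2 + w₂ ^ 2) * (K * δ) / #S + 2 * (w₁ ^ 2 + w₂ ^ 2) * (K * δ) / #T) := by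
        gcongr <;> exact hsum _
    _ = 4 * δ * (1 / p₁ + 1 / p₂) * (w₁ ^ 2 + w₂ ^ 2) := by
        rw [hp₁, hp₂, one_div_div, one_div_div]
        ring

theorem bounded_global_gradient_variance
    (n K : ℕ) (hn : 1 ≤ n) (hK : 1 ≤ K)
    {Ω : Type*} [MeasurableSpace Ω] (ℙ : Measure Ω) [IsProbabilityMeasure ℙ]
    (S T : Finset (Fin K)) (hTS : T ⊆ S) (hS : S.Nonempty) (hT : T.Nonempty)
    (p₁ p₂ : ℝ) (hp₁ : p₁ = (S.card : ℝ) / K) (hp₂ : p₂ = (T.card : ℝ) / K)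
    (ξ ξ' : Fin n → ℝ) (hξ : ∀ i, ξ i = 0 ∨ ξ i = 1) (hξ' : ∀ i, ξ' i = 1 - ξ i)
    (w₁ w₂ : ℝ) (σ : Fin K → ℝ) (hσ : ∀ k, 0 ≤ σ k)
    (δ : ℝ) (hδ : δ = (1 / (K : ℝ)) * ∑ k, σ k ^ 2)
    (a b : Fin K → Ω → EuclideanSpace ℝ (Fin n))
    (ha : ∀ k, MemLp (a k) 2 ℙ) (hb : ∀ k, MemLp (b k) 2 ℙ)
    (hva : ∀ k, ∫ ω, ‖a k ω - ∫ ω', a k ω' ∂ℙ‖ ^ 2 ∂ℙ ≤ σ k ^ 2)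
    (hvb : ∀ k, ∫ ω, ‖b k ω - ∫ ω', b k ω' ∂ℙ‖ ^ 2 ∂ℙ ≤ σ k ^ 2)
    (g : Fin K → Ω → EuclideanSpace ℝ (Fin n))
    (hg : ∀ k ω, g k ω = w₁ • hadamard ξ (a k ω) + w₂ • b k ω)
    (f : Ω → EuclideanSpace ℝ (Fin n))
    (hf : ∀ ω, f ω = (1 / ((K : ℝ) * p₁)) • ∑ k ∈ S, hadamard ξ (g k ω) +
        (1 / ((K : ℝ) * p₂)) • ∑ k ∈ T, hadamard ξ' (g k ω)) :
    ∫ ω, ‖f ω - ∫ ω', f ω' ∂ℙ‖ ^ 2 ∂ℙ ≤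
      4 * δ * (1 / p₁ + 1 / p₂) * (w₁ ^ 2 + w₂ ^ 2) :=
  bounded_global_gradient_variance_general n K hK ℙ S T p₁ p₂ hp₁ hp₂ ξ ξ' hξ hξ' w₁ w₂ σ δ hδ a b
    ha hb hva hvb g hg f hf
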